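/- Let u be a polynomial with simple roots t_1,...,t_l satisfying the sl_2 Bethe equation, generic with respect to the data. Then the difference equation A(x)v(x+h) + B(x)v(x) + C(x)v(x-h) = 0, with A(x)=∏(x-z_s), C(x)=∏(x-z_s+Λ_s h), and B(x) = -(A(x)u(x+h)+C(x)u(x-h))/u(x) (a polynomial), has a two-dimensional space of polynomial solutions. -/

import Mathlib

/-!
By the choice of `B`, `u` is a solution. For two solutions `u, w` the Casoratian
`W(x) = u(x) w(x + h) - u(x + h) w(x)` satisfies `A(x) W(x) = C(x) W(x - h)`, and so does
`T(x) = ∏_s ∏_{i=1}^{Λ_s} (x - z_s + i h)`. Hence `W / T` is `h`-periodic, so `W = c T`; and a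
solution whose Casoratian with `u` vanishes is a multiple of `u`. So the solutions form a space of
dimension at most two, with equality as soon as some `v` has Casoratian `T` with `u` (such a `v`
is automatically a solution).

To build `v`, interpolate at the roots: choose `v₀` with `T - W(u, v₀)` vanishing at every `t_j`.
The Bethe equations say exactly that it then also vanishes at every `t_j - h`, so
`T - W(u, v₀) = u(x) u(x + h) q(x)`. Correcting `v₀` by `u g`, where `g(x + h) - g(x) = q(x)`,
gives `W(u, v) = T`.
-/

open Polynomial Finset

/-- The space of polynomial solutions of the difference equation
`A(x)u(x+h) + B(x)u(x) + C(x)u(x-h) = 0`. -/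
noncomputable def solSpace (h : ℂ) (A B C : Polynomial ℂ) : Submodule ℂ (Polynomial ℂ) where
  carrier := {u | ∀ x : ℂ,
    A.eval x * u.eval (x + h) + B.eval x * u.eval x + C.eval x * u.eval (x - h) = 0}
  add_mem' := by
    intro a b ha hb x
    have h1 := ha x
    have h2 := hb x
    simp only [Polynomial.eval_add]
    linear_combination h1 + h2
  zero_mem' := by intro x; simp
  smul_mem' := by
    intro c a ha x
    have h1 := ha x
    simp only [Polynomial.eval_smul, smul_eq_mul]
    linear_combination c * h1

theorem mul_prod_range_add_succ_mul {R : Type*} [CommRing R] (a h : R) (m : ℕ) :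
    a * ∏ i ∈ range m, (a + (i + 1) * h) = (a + m * h) * ∏ i ∈ range m, (a + i * h) := by
  have h₁ := prod_range_succ' (fun i : ℕ => a + i * h) m
  rw [prod_range_succ] at h₁
  push_cast at h₁
  linear_combination -h₁

namespace Polynomial

theorem eq_zero_of_forall_eval_mul_eq_zero {R : Type*} [CommRing R] [IsDomain R] [Infinite R]
    {p q : R[X]} (hp : p ≠ 0) (hpq : ∀ x, p.eval x * q.eval x = 0) : q = 0 :=
  (mul_eq_zero.1 (funext fun x => by simpa using hpq x)).resolve_left hp

section CharZero

variable {K : Type*} [Field K] [CharZero K] {h : K}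

theorem exists_eq_smul_of_mul_comp_X_sub_C_eq (hh : h ≠ 0) {P Q : K[X]} (hQ : Q ≠ 0)
    (hPQ : P * Q.comp (X - C h) = P.comp (X - C h) * Q) : ∃ c : K, P = c • Q := by
  have hmul : Function.Injective fun k : ℕ => (k : K) * h :=
    fun a b hab => Nat.cast_injective (mul_right_cancel₀ hh hab)
  obtain ⟨M, hM⟩ : ∃ M : ℕ, ∀ k, M ≤ k → Q.eval (k * h) ≠ 0 := by
    obtain ⟨M, hM⟩ := ((finite_setOfPred_isRoot hQ).preimage hmul.injOn).bddAbove
    exact ⟨M + 1, fun k hk hroot => absurd (hM hroot) (by omega)⟩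
  set c := P.eval (M * h) / Q.eval (M * h)
  set R := P - c • Q
  have hR : R * Q.comp (X - C h) = R.comp (X - C h) * Q := by
    simp only [R, sub_comp, smul_eq_C_mul, mul_comp, C_comp]
    linear_combination hPQ
  -- the zeros of `R` propagate along `M h, (M + 1) h, ...`, where `Q` does not vanish
  have hroot : ∀ k, M ≤ k → R.IsRoot (k * h) := by
    refine Nat.le_induction ?_ fun k hk ih => ?_
    · simp [R, c, div_mul_cancel₀ _ (hM M le_rfl)]
    · have := congrArg (eval ((k + 1 : ℕ) * h)) hR
      have hkh : ((k + 1 : ℕ) : K) * h - h = k * h := by push_cast; ring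
      simp only [eval_mul, eval_comp, eval_sub, eval_X, eval_C, hkh, ih.eq_zero, zero_mul] at this
      exact (mul_eq_zero.1 this).resolve_right (hM k hk)
  have hinf : ((fun k : ℕ => (k : K) * h) '' Set.Ici M).Infinite :=
    (Set.Ici_infinite M).image hmul.injOn
  exact ⟨c, sub_eq_zero.1 <| eq_zero_of_infinite_isRoot R <|
    hinf.mono <| Set.image_subset_iff.2 fun k hk => hroot k hk⟩

theorem coeff_X_add_C_pow_succ_sub_X_pow {N m : ℕ} (hm : N ≤ m) :
    ((X + C h) ^ (N + 1) - X ^ (N + 1)).coeff m = if m = N then (N + 1) * h else 0 := by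
  rw [coeff_sub, coeff_X_add_C_pow, coeff_X_pow]
  obtain rfl | rfl | hlt : m = N ∨ m = N + 1 ∨ N + 1 < m := by omega
  · simp; ring
  · simp
  · simp [Nat.choose_eq_zero_of_lt hlt, hlt.ne', (Nat.lt_of_succ_lt hlt).ne']

theorem exists_comp_X_add_C_sub_eq (hh : h ≠ 0) (q : K[X]) :
    ∃ g : K[X], g.comp (X + C h) - g = q := by
  suffices H : ∀ N : ℕ, ∀ q : K[X], q.degree < N → ∃ g : K[X], g.comp (X + C h) - g = q from
    H _ q (degree_le_natDegree.trans_lt (WithBot.coe_lt_coe.2 q.natDegree.lt_succ_self))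
  intro N
  induction N with
  | zero =>
    intro q hq
    exact ⟨0, by simpa [eq_comm (a := ⊥), eq_comm (a := (0 : K[X]))] using hq⟩
  | succ N ih =>
    intro q hq
    set c := q.coeff N / ((N + 1) * h)
    obtain ⟨g, hg⟩ := ih (q - C c * ((X + C h) ^ (N + 1) - X ^ (N + 1))) <| by
      rw [degree_lt_iff_coeff_zero]
      intro m hm
      rw [coeff_sub, coeff_C_mul, coeff_X_add_C_pow_succ_sub_X_pow hm]
      split_ifs with hmN
      · subst hmN
        have : ((m : K) + 1) * h ≠ 0 := mul_ne_zero (by exact_mod_cast m.succ_ne_zero) hh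
        simp [c, div_mul_cancel₀ _ this]
      · rw [(degree_lt_iff_coeff_zero q _).1 hq m (by omega), mul_zero, sub_zero]
    exact ⟨g + C c * X ^ (N + 1), by
      simp only [add_comp, mul_comp, C_comp, X_pow_comp]
      linear_combination hg⟩

end CharZero

section Casoratian

variable {R : Type*} [CommRing R] {h : R}

/-- The discrete analogue of the Wronskian. -/
noncomputable def casoratian (h : R) (u : R[X]) : R[X] →ₗ[R] R[X] where
  toFun w := u * w.comp (X + C h) - u.comp (X + C h) * w
  map_add' v w := by simp only [add_comp]; ring
  map_smul' a w := by simp only [smul_eq_C_mul, mul_comp, C_comp, RingHom.id_apply]; ring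

@[simp]
theorem eval_casoratian (u w : R[X]) (x : R) :
    (casoratian h u w).eval x = u.eval x * w.eval (x + h) - u.eval (x + h) * w.eval x := by
  simp [casoratian, eval_comp]

theorem casoratian_self (u : R[X]) : casoratian h u u = 0 := by
  simp only [casoratian, LinearMap.coe_mk, AddHom.coe_mk]
  ring

theorem casoratian_mul_self (u g : R[X]) :
    casoratian h u (u * g) = u * u.comp (X + C h) * (g.comp (X + C h) - g) := by
  simp only [casoratian, LinearMap.coe_mk, AddHom.coe_mk, mul_comp]
  ring

end Casoratian

variable {K : Type*} [Field K] {h : K}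

theorem exists_eq_smul_of_casoratian_eq_zero [CharZero K] (hh : h ≠ 0) {u w : K[X]}
    (hu : u ≠ 0) (huw : casoratian h u w = 0) : ∃ c : K, w = c • u := by
  refine exists_eq_smul_of_mul_comp_X_sub_C_eq hh hu (funext fun x => ?_)
  have := congrArg (eval (x - h)) huw
  simp only [eval_casoratian, sub_add_cancel, eval_zero] at this
  simp only [eval_mul, eval_comp, eval_sub, eval_X, eval_C]
  linear_combination this

open Lagrange in
theorem exists_casoratian_nodal_eq [CharZero K] {ι : Type*} [Fintype ι] [DecidableEq ι]
    {t : ι → K} (hh : h ≠ 0) (ht : Function.Injective t) (hsep : ∀ i k, t i + h ≠ t k)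
    (T : K[X]) (hT : ∀ j, T.eval (t j) * (nodal univ t).eval (t j - h)
      + T.eval (t j - h) * (nodal univ t).eval (t j + h) = 0) :
    ∃ v, casoratian h (nodal univ t) v = T := by
  set u := nodal univ t
  have hu_add : ∀ j, u.eval (t j + h) ≠ 0 := fun j =>
    eval_nodal_not_at_node fun k _ => hsep j k
  set v₀ := interpolate univ t fun j => -T.eval (t j) / u.eval (t j + h)
  have hv₀ : ∀ j, u.eval (t j + h) * v₀.eval (t j) = -T.eval (t j) := fun j => by
    rw [eval_interpolate_at_node _ ht.injOn (mem_univ j), mul_div_cancel₀ _ (hu_add j)]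
  have hroots : nodal univ (Sum.elim t fun i => t i - h) = u * u.comp (X + C h) := by
    simp only [u, nodal, Fintype.prod_sum_type, Sum.elim_inl, Sum.elim_inr, prod_comp,
      sub_comp, X_comp, C_comp, C_sub]
    exact congrArg _ (prod_congr rfl fun i _ => by ring)
  -- `T - casoratian h u v₀` vanishes at every `t j` and `t j - h`
  obtain ⟨q, hq⟩ : u * u.comp (X + C h) ∣ T - casoratian h u v₀ := by
    rw [← hroots]
    refine Fintype.prod_dvd_of_coprime (pairwise_coprime_X_sub_C <|
      ht.sumElim (sub_left_injective.comp ht) fun i k hik => hsep i k (by simp [hik])) ?_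
    rintro (j | j) <;> refine dvd_iff_isRoot.2 ?_ <;>
      simp only [IsRoot, Sum.elim_inl, Sum.elim_inr]
    · simp [u, eval_nodal_at_node (mem_univ j), hv₀]
    · refine (mul_right_inj' (hu_add j)).1 ?_
      simp only [eval_sub, eval_casoratian, sub_add_cancel, u, eval_nodal_at_node (mem_univ j)]
      linear_combination hT j - (nodal univ t).eval (t j - h) * hv₀ j
  obtain ⟨g, hg⟩ := exists_comp_X_add_C_sub_eq hh q
  exact ⟨v₀ + u * g, by rw [map_add, casoratian_mul_self, hg, ← hq]; ring⟩

end Polynomial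

section SolSpace

variable {h : ℂ} {A B C T u v w : ℂ[X]}

theorem casoratian_recurrence (hu : u ∈ solSpace h A B C) (hw : w ∈ solSpace h A B C) (x : ℂ) :
    A.eval x * (casoratian h u w).eval x = C.eval x * (casoratian h u w).eval (x - h) := by
  simp only [eval_casoratian, sub_add_cancel]
  linear_combination u.eval x * hw x - w.eval x * hu x

theorem mem_solSpace_of_casoratian_recurrence (hu : u ∈ solSpace h A B C) (hu₀ : u ≠ 0)
    (hW : ∀ x, A.eval x * (casoratian h u v).eval x = C.eval x * (casoratian h u v).eval (x - h)) :
    v ∈ solSpace h A B C := by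
  set E := A * v.comp (X + Polynomial.C h) + B * v + C * v.comp (X - Polynomial.C h)
  have hE : ∀ x, E.eval x =
      A.eval x * v.eval (x + h) + B.eval x * v.eval x + C.eval x * v.eval (x - h) := fun x => by
    simp [E, eval_comp]
  have hE₀ : E = 0 := eq_zero_of_forall_eval_mul_eq_zero hu₀ fun x => by
    have := hW x
    simp only [eval_casoratian, sub_add_cancel] at this
    rw [hE]
    linear_combination this + v.eval x * hu x
  intro x
  rw [← hE, hE₀, eval_zero]

theorem exists_casoratian_eq_smul (hh : h ≠ 0) (hA : A ≠ 0) (hT : T ≠ 0)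
    (hAT : ∀ x, A.eval x * T.eval x = C.eval x * T.eval (x - h))
    (hu : u ∈ solSpace h A B C) (hw : w ∈ solSpace h A B C) :
    ∃ c : ℂ, casoratian h u w = c • T := by
  set W := casoratian h u w
  refine exists_eq_smul_of_mul_comp_X_sub_C_eq hh hT (sub_eq_zero.1 <|
    eq_zero_of_forall_eval_mul_eq_zero hA fun x => ?_)
  simp only [eval_sub, eval_mul, eval_comp, eval_X, eval_C]
  linear_combination T.eval (x - h) * casoratian_recurrence hu hw x - W.eval (x - h) * hAT x

theorem rank_solSpace_eq_two (hh : h ≠ 0) (hA : A ≠ 0) (hT : T ≠ 0)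
    (hAT : ∀ x, A.eval x * T.eval x = C.eval x * T.eval (x - h))
    (hu : u ∈ solSpace h A B C) (hu₀ : u ≠ 0) (huv : casoratian h u v = T) :
    Module.rank ℂ (solSpace h A B C) = 2 := by
  have hv : v ∈ solSpace h A B C := mem_solSpace_of_casoratian_recurrence hu hu₀ (huv ▸ hAT)
  have hli : LinearIndependent ℂ ![u, v] := by
    refine LinearIndependent.pair_iff.2 fun a b hab => ?_
    have hb : b • T = 0 := by
      simpa [casoratian_self, huv] using congrArg (casoratian h u) hab
    obtain rfl : b = 0 := (smul_eq_zero.1 hb).resolve_right hT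
    simpa [hu₀] using hab
  have hspan : Submodule.span ℂ (Set.range ![u, v]) = solSpace h A B C := by
    refine le_antisymm (Submodule.span_le.2 <| Set.range_subset_iff.2 <|
      Fin.forall_fin_two.2 ⟨hu, hv⟩) fun w hw => ?_
    obtain ⟨c, hc⟩ := exists_casoratian_eq_smul hh hA hT hAT hu hw
    obtain ⟨d, hd⟩ := exists_eq_smul_of_casoratian_eq_zero hh hu₀ (w := w - c • v) <| by
      rw [map_sub, map_smul, hc, huv, sub_self]
    refine (Submodule.mem_span_range_iff_exists_fun ℂ).2 ⟨![d, c], ?_⟩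
    simp [Fin.sum_univ_two, ← hd]
  rw [← hspan, rank_span hli, Cardinal.mk_range_eq _ hli.injective]
  simp

end SolSpace

section Bethe

variable {K : Type*} [Field K] {σ : Type*} [Fintype σ] {h : K} {z : σ → K} {Λ : σ → ℕ}

/-- The polynomial `T(x) = ∏_s ∏_{i=1}^{Λ_s} (x - z_s + i h)`. -/
noncomputable def weightPoly (h : K) (z : σ → K) (Λ : σ → ℕ) : K[X] :=
  ∏ s, ∏ i ∈ range (Λ s), (X - C (z s - (i + 1) * h))

theorem monic_weightPoly : (weightPoly h z Λ).Monic :=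
  monic_prod_of_monic _ _ fun _ _ => monic_prod_of_monic _ _ fun _ _ => monic_X_sub_C _

theorem eval_weightPoly (x : K) :
    (weightPoly h z Λ).eval x = ∏ s, ∏ i ∈ range (Λ s), (x - z s + (i + 1) * h) := by
  simp only [weightPoly, eval_prod, eval_sub, eval_X, eval_C]
  exact prod_congr rfl fun s _ => prod_congr rfl fun i _ => by ring

theorem prod_sub_mul_eval_weightPoly (x : K) :
    (∏ s, (x - z s)) * (weightPoly h z Λ).eval x
      = (∏ s, (x - z s + Λ s * h)) * (weightPoly h z Λ).eval (x - h) := by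
  simp only [eval_weightPoly, ← prod_mul_distrib]
  refine prod_congr rfl fun s _ => ?_
  rw [mul_prod_range_add_succ_mul]
  exact congrArg _ (prod_congr rfl fun i _ => by ring)

open Lagrange in
theorem eval_weightPoly_mul_nodal_add_eq_zero {ι : Type*} [Fintype ι] [DecidableEq ι]
    {t : ι → K} (hsep : ∀ i k, t i + h ≠ t k)
    (hBethe : ∀ j, (∏ s, (t j - z s + Λ s * h) / (t j - z s))
        * ∏ k ∈ univ.erase j, (t j - t k - h) / (t j - t k + h) = 1) (j : ι) :
    (weightPoly h z Λ).eval (t j) * (nodal univ t).eval (t j - h)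
      + (weightPoly h z Λ).eval (t j - h) * (nodal univ t).eval (t j + h) = 0 := by
  have hz : ∏ s, (t j - z s) ≠ 0 := prod_ne_zero_iff.2 fun s _ hs => by
    have := hBethe j
    rw [prod_eq_zero (mem_univ s) (by rw [hs, div_zero]), zero_mul] at this
    exact zero_ne_one this
  have ht : ∏ k ∈ univ.erase j, (t j - t k + h) ≠ 0 :=
    prod_ne_zero_iff.2 fun k _ hk => hsep j k (by linear_combination hk)
  have hBethe' : (∏ s, (t j - z s + Λ s * h)) * ∏ k ∈ univ.erase j, (t j - t k - h)
      = (∏ s, (t j - z s)) * ∏ k ∈ univ.erase j, (t j - t k + h) := by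
    have := hBethe j
    rwa [prod_div_distrib, prod_div_distrib, div_mul_div_comm,
      div_eq_one_iff_eq (mul_ne_zero hz ht)] at this
  have hplus : (nodal univ t).eval (t j + h) = h * ∏ k ∈ univ.erase j, (t j - t k + h) := by
    rw [eval_nodal, ← mul_prod_erase _ _ (mem_univ j), add_sub_cancel_left]
    exact congrArg _ (prod_congr rfl fun k _ => by ring)
  have hminus : (nodal univ t).eval (t j - h) = -h * ∏ k ∈ univ.erase j, (t j - t k - h) := by
    rw [eval_nodal, ← mul_prod_erase _ _ (mem_univ j), sub_sub_cancel_left]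
    exact congrArg _ (prod_congr rfl fun k _ => by ring)
  refine (mul_left_inj' hz).1 ?_
  rw [hplus, hminus, zero_mul]
  linear_combination
    (-h * ∏ k ∈ univ.erase j, (t j - t k - h)) * prod_sub_mul_eval_weightPoly (Λ := Λ) (t j) - h * (weightPoly h z Λ).eval (t j - h) * hBethe'

end Bethe

theorem stmt11_general (h : ℂ) (hh : h ≠ 0) (n l : ℕ) (z : Fin n → ℂ)
    (Λ : Fin n → ℕ)
    (t : Fin l → ℂ) (hinj : Function.Injective t)
    (hsep : ∀ i k, i ≠ k → t i ≠ t k + h ∧ t i ≠ t k - h)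
    (u : Polynomial ℂ)
    (hu : u = ∏ i, (Polynomial.X - Polynomial.C (t i)))
    (hBethe : ∀ j, (∏ s, (t j - z s + Λ s * h) / (t j - z s))
        * ∏ k ∈ Finset.univ.erase j, (t j - t k - h) / (t j - t k + h) = 1)
    (A C B : Polynomial ℂ)
    (hA : A = ∏ s, (Polynomial.X - Polynomial.C (z s)))
    (hC : C = ∏ s, (Polynomial.X - Polynomial.C (z s - Λ s * h)))
    (hB : ∀ x : ℂ, B.eval x * u.eval x
      = -(A.eval x * u.eval (x + h) + C.eval x * u.eval (x - h))) :
    Module.rank ℂ (solSpace h A B C) = 2 := by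
  have hshift : ∀ i k, t i + h ≠ t k := fun i k hik => by
    rcases eq_or_ne k i with rfl | hki
    · exact hh (by linear_combination hik)
    · exact (hsep k i hki).1 hik.symm
  obtain ⟨v, hv⟩ := exists_casoratian_nodal_eq hh hinj hshift (weightPoly h z Λ)
    (eval_weightPoly_mul_nodal_add_eq_zero hshift hBethe)
  have hnodal : u = Lagrange.nodal univ t := hu
  subst hnodal hA hC
  refine rank_solSpace_eq_two hh (monic_prod_of_monic _ _ fun _ _ => monic_X_sub_C _).ne_zero
    monic_weightPoly.ne_zero (fun x => ?_) (fun x => by linear_combination hB x)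
    Lagrange.nodal_ne_zero hv
  simpa [eval_prod, sub_sub_eq_add_sub, add_sub_right_comm] using prod_sub_mul_eval_weightPoly (h := h) (z := z) (Λ := Λ) x

/-- for `u` generic with roots forming a solution of the sl₂ Bethe
equation, the difference equation with `A(x)=∏(x-z_s)`, `C(x)=∏(x-z_s+Λ_s h)` and
`B(x) = -(A(x)u(x+h)+C(x)u(x-h))/u(x)` has a two-dimensional space of polynomial
solutions. -/
theorem stmt11 (h : ℂ) (hh : h ≠ 0) (n l : ℕ) (z : Fin n → ℂ)
    (hz : Function.Injective z) (Λ : Fin n → ℕ) (hΛ : ∀ s, 1 ≤ Λ s)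
    (t : Fin l → ℂ) (hinj : Function.Injective t)
    (hsep : ∀ i k, i ≠ k → t i ≠ t k + h ∧ t i ≠ t k - h)
    (hTt : ∀ j, (∏ s, ∏ i ∈ Finset.range (Λ s), (t j - z s + (i + 1) * h)) ≠ 0)
    (u : Polynomial ℂ)
    (hu : u = ∏ i, (Polynomial.X - Polynomial.C (t i)))
    (hBethe : ∀ j, (∏ s, (t j - z s + Λ s * h) / (t j - z s))
        * ∏ k ∈ Finset.univ.erase j, (t j - t k - h) / (t j - t k + h) = 1)
    (A C B : Polynomial ℂ)
    (hA : A = ∏ s, (Polynomial.X - Polynomial.C (z s)))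
    (hC : C = ∏ s, (Polynomial.X - Polynomial.C (z s - Λ s * h)))
    (hB : ∀ x : ℂ, B.eval x * u.eval x
      = -(A.eval x * u.eval (x + h) + C.eval x * u.eval (x - h))) :
    Module.rank ℂ (solSpace h A B C) = 2 :=
  stmt11_general h hh n l z Λ t hinj hsep u hu hBethe A C B hA hC hB
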